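/- arXiv:1304.2170 — 2 statements merged into one kernel-verified Lean document; each statement's English description precedes it below -/
import Mathlib

section
/- For any two genomes G1 and G2 on the same finite extremity set V, with adjacency sets Π1 and Π2 respectively, the SCJ distance satisfies d_SCJ(G1,G2) = |Π1 Δ Π2|, where Δ denotes the symmetric difference of the two sets of adjacencies. In particular, some SCJ scenario from G1 to G2 always exists. -/
/-- A genome on an extremity type `V`: a finite set of adjacencies (unordered pairs of
distinct extremities) that are pairwise disjoint (a partial matching). -/
structure Genome (V : Type*) where
  adj : Finset (Sym2 V)
  not_isDiag : ∀ p ∈ adj, ¬ p.IsDiag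
  disj : ∀ p ∈ adj, ∀ q ∈ adj, p ≠ q → ∀ x, x ∈ p → x ∉ q

instance {V : Type*} : Inhabited (Genome V) :=
  ⟨⟨∅, by simp, by simp⟩⟩

variable {V : Type*} [DecidableEq V]

/-- The step from `G` to `G'` is a cut removing the adjacency `p`. -/
def CutsAdj (G G' : Genome V) (p : Sym2 V) : Prop :=
  p ∈ G.adj ∧ G'.adj = G.adj.erase p

/-- The step from `G` to `G'` is a join adding the adjacency `p`
(validity of `G'` forces `p` to be a pair of distinct, currently unmatched extremities). -/
def JoinsAdj (G G' : Genome V) (p : Sym2 V) : Prop :=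
  p ∉ G.adj ∧ G'.adj = insert p G.adj

/-- A single SCJ operation. -/
def SCJStep (G G' : Genome V) : Prop :=
  ∃ p, CutsAdj G G' p ∨ JoinsAdj G G' p

/-- An SCJ scenario from `G1` to `G2`: a finite sequence of genomes starting at `G1`,
ending at `G2`, consecutive ones differing by a single SCJ operation.  A scenario
represented by a list `L` has `L.length - 1` operations. -/
def IsScenario (G1 G2 : Genome V) (L : List (Genome V)) : Prop :=
  L.head? = some G1 ∧ L.getLast? = some G2 ∧ L.Chain' SCJStep

/-- The SCJ distance: the minimum number of operations in a scenario from `G1` to `G2`. -/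
noncomputable def dSCJ (G1 G2 : Genome V) : ℕ :=
  sInf {n | ∃ L, IsScenario G1 G2 L ∧ L.length = n + 1}

/-- A most parsimonious SCJ scenario. -/
def IsMPS (G1 G2 : Genome V) (L : List (Genome V)) : Prop :=
  IsScenario G1 G2 L ∧ L.length = dSCJ G1 G2 + 1

/-- The number of most parsimonious SCJ scenarios from `G1` to `G2`. -/
noncomputable def NumMPS (G1 G2 : Genome V) : ℕ :=
  {L | IsMPS G1 G2 L}.ncard

/-- The `i`-th step of the scenario `L` (steps indexed from `0`) cuts adjacency `p`. -/
def StepCut (L : List (Genome V)) (i : ℕ) (p : Sym2 V) : Prop :=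
  i + 1 < L.length ∧ CutsAdj (L.getD i default) (L.getD (i + 1) default) p

/-- The `i`-th step of the scenario `L` (steps indexed from `0`) joins adjacency `p`. -/
def StepJoin (L : List (Genome V)) (i : ℕ) (p : Sym2 V) : Prop :=
  i + 1 < L.length ∧ JoinsAdj (L.getD i default) (L.getD (i + 1) default) p

/-- `c` is an alternating (up-down) permutation:
`c 0 < c 1 > c 2 < c 3 > …` (i.e. in 1-based notation `c₁ < c₂ > c₃ < …`). -/
def IsAltPerm {n : ℕ} (c : Equiv.Perm (Fin n)) : Prop :=
  ∀ i : ℕ, ∀ h : i + 1 < n,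
    if i % 2 = 0 then c ⟨i, by omega⟩ < c ⟨i + 1, h⟩
    else c ⟨i + 1, h⟩ < c ⟨i, by omega⟩

/-- `A n`, the number of alternating permutations of size `n` (with `A 0 = 1`). -/
noncomputable def altPermCount (n : ℕ) : ℕ :=
  Nat.card {c : Equiv.Perm (Fin n) // IsAltPerm c}

/-!
Each SCJ operation adds or removes a single adjacency, so it changes the symmetric
difference with the target genome by exactly one element; hence every scenario has at
least `|Π₁ Δ Π₂|` steps. Conversely, cutting the adjacencies of `Π₁ \ Π₂` one at a time
and then joining those of `Π₂ \ Π₁` decreases the symmetric difference at each step, and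
every intermediate adjacency set lies inside `Π₁` or inside `Π₂`, so it is again a
partial matching.
-/

namespace Genome

variable {α : Type*}

theorem adj_injective : Function.Injective (adj : Genome α → Finset (Sym2 α)) := by
  rintro ⟨_, _, _⟩ ⟨_, _, _⟩ rfl
  rfl

def restrict (G : Genome α) (A : Finset (Sym2 α)) (h : A ⊆ G.adj) : Genome α where
  adj := A
  not_isDiag p hp := G.not_isDiag p (h hp)
  disj p hp q hq := G.disj p (h hp) q (h hq)

@[simp]
theorem adj_restrict (G : Genome α) (A : Finset (Sym2 α)) (h : A ⊆ G.adj) :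
    (G.restrict A h).adj = A :=
  rfl

end Genome

section

variable {G G' G1 G2 : Genome V}

theorem SCJStep.exists_symmDiff_eq_singleton (h : SCJStep G G') :
    ∃ p, symmDiff G.adj G'.adj = {p} := by
  obtain ⟨p, ⟨hp, hG'⟩ | ⟨hp, hG'⟩⟩ := h <;>
  · refine ⟨p, ?_⟩
    ext q
    by_cases hq : q = p <;> simp_all [Finset.mem_symmDiff]

theorem SCJStep.card_symmDiff_le (h : SCJStep G G') (G2 : Genome V) :
    (symmDiff G.adj G2.adj).card ≤ (symmDiff G'.adj G2.adj).card + 1 := by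
  obtain ⟨p, hp⟩ := h.exists_symmDiff_eq_singleton
  calc (symmDiff G.adj G2.adj).card
      ≤ (symmDiff G.adj G'.adj ∪ symmDiff G'.adj G2.adj).card :=
        Finset.card_le_card (symmDiff_triangle _ _ _)
    _ ≤ _ := by
        rw [hp, add_comm]
        exact Finset.card_union_le _ _

theorem IsScenario.card_symmDiff_lt_length :
    ∀ {L : List (Genome V)} {G1 G2 : Genome V},
      IsScenario G1 G2 L → (symmDiff G1.adj G2.adj).card < L.length
  | [], _, _, ⟨h, _⟩ => by simp at h
  | [_], _, _, ⟨h1, h2, _⟩ => by simp_all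
  | G :: G' :: T, G1, G2, ⟨h1, h2, hchain⟩ => by
    obtain rfl : G = G1 := by simpa using h1
    rw [List.Chain', List.isChain_cons_cons] at hchain
    have htail : IsScenario G' G2 (G' :: T) := ⟨rfl, by simpa using h2, hchain.2⟩
    have := htail.card_symmDiff_lt_length
    have := hchain.1.card_symmDiff_le G2
    simp only [List.length_cons] at *
    omega

theorem isScenario_singleton (G : Genome V) : IsScenario G G [G] :=
  ⟨rfl, rfl, List.isChain_singleton G⟩

theorem IsScenario.cons {L : List (Genome V)} (hL : IsScenario G' G2 L) (h : SCJStep G1 G') :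
    IsScenario G1 G2 (G1 :: L) := by
  obtain ⟨G'', T, rfl⟩ : ∃ G'' T, L = G'' :: T :=
    List.exists_cons_of_ne_nil (by rintro rfl; simp [IsScenario] at hL)
  obtain ⟨h1, h2, hchain⟩ := hL
  obtain rfl : G'' = G' := by simpa using h1
  exact ⟨rfl, by simpa using h2, List.isChain_cons_cons.mpr ⟨h, hchain⟩⟩

theorem exists_scjStep_card_symmDiff_eq (h : G1 ≠ G2) :
    ∃ G', SCJStep G1 G' ∧
      (symmDiff G'.adj G2.adj).card + 1 = (symmDiff G1.adj G2.adj).card := by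
  by_cases hsub : G1.adj ⊆ G2.adj
  · obtain ⟨p, hp2, hp1⟩ := Finset.exists_of_ssubset
      (hsub.ssubset_of_ne (Genome.adj_injective.ne h))
    refine ⟨G2.restrict (insert p G1.adj) (Finset.insert_subset hp2 hsub),
      ⟨p, Or.inr ⟨hp1, rfl⟩⟩, ?_⟩
    have : symmDiff G1.adj G2.adj = insert p (symmDiff (insert p G1.adj) G2.adj) := by
      ext q
      by_cases hq : q = p <;> simp_all [Finset.mem_symmDiff]
    rw [Genome.adj_restrict, this,
      Finset.card_insert_of_notMem (by simp [Finset.mem_symmDiff, hp2])]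
  · obtain ⟨p, hp1, hp2⟩ := Finset.not_subset.mp hsub
    refine ⟨G1.restrict (G1.adj.erase p) (Finset.erase_subset _ _),
      ⟨p, Or.inl ⟨hp1, rfl⟩⟩, ?_⟩
    have : symmDiff G1.adj G2.adj = insert p (symmDiff (G1.adj.erase p) G2.adj) := by
      ext q
      by_cases hq : q = p <;> simp_all [Finset.mem_symmDiff]
    rw [Genome.adj_restrict, this,
      Finset.card_insert_of_notMem (by simp [Finset.mem_symmDiff, hp2])]

theorem exists_isScenario_length_eq (G1 G2 : Genome V) :
    ∃ L, IsScenario G1 G2 L ∧ L.length = (symmDiff G1.adj G2.adj).card + 1 := by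
  induction hn : (symmDiff G1.adj G2.adj).card generalizing G1 with
  | zero =>
    obtain rfl : G1 = G2 := Genome.adj_injective (by simpa using hn)
    exact ⟨[G1], isScenario_singleton G1, rfl⟩
  | succ n ih =>
    obtain ⟨G', hstep, hcard⟩ :=
      exists_scjStep_card_symmDiff_eq (G1 := G1) (G2 := G2) (by rintro rfl; simp at hn)
    obtain ⟨L, hL, hlen⟩ := ih G' (by omega)
    exact ⟨G1 :: L, hL.cons hstep, by simp [hlen]⟩

theorem isLeast_scenario_length (G1 G2 : Genome V) :
    IsLeast {n | ∃ L, IsScenario G1 G2 L ∧ L.length = n + 1}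
      (symmDiff G1.adj G2.adj).card := by
  refine ⟨exists_isScenario_length_eq G1 G2, ?_⟩
  rintro n ⟨L, hL, hlen⟩
  have := hL.card_symmDiff_lt_length
  omega

end

theorem dSCJ_eq_card_symmDiff_general {V : Type*} [DecidableEq V] (G1 G2 : Genome V) :
    (∃ L, IsScenario G1 G2 L) ∧ dSCJ G1 G2 = (symmDiff G1.adj G2.adj).card :=
  have hleast := isLeast_scenario_length G1 G2
  ⟨hleast.1.imp fun _ h => h.1, hleast.csInf_eq⟩

/-- For genomes `G1`, `G2` on the same finite extremity set, a scenario
always exists and the SCJ distance equals the cardinality of the symmetric difference of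
the adjacency sets. -/
theorem dSCJ_eq_card_symmDiff {V : Type*} [Fintype V] [DecidableEq V] (G1 G2 : Genome V) :
    (∃ L, IsScenario G1 G2 L) ∧ dSCJ G1 G2 = (symmDiff G1.adj G2.adj).card :=
  dSCJ_eq_card_symmDiff_general G1 G2
end

section
/- For every i ≥ 1, the numbers of alternating permutations satisfy the convolution identity A_{2i+1} = Σ_{j=1}^{i} binom(2i, 2j-1) · A_{2j-1} · A_{2(i-j)+1}. -/
def Alt {n : ℕ} {α : Type*} [LT α] (f : Fin n → α) : Prop :=
  ∀ i : ℕ, ∀ h : i + 1 < n,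
    if i % 2 = 0 then f ⟨i, by omega⟩ < f ⟨i + 1, h⟩
    else f ⟨i + 1, h⟩ < f ⟨i, by omega⟩
lemma isAltPerm_iff_alt {n : ℕ} (c : Equiv.Perm (Fin n)) : IsAltPerm c ↔ Alt (⇑c) := Iff.rfl
lemma alt_comp {n : ℕ} {α β : Type*} [LinearOrder α] [Preorder β] {g : α → β}
    (hg : StrictMono g) (f : Fin n → α) : Alt (g ∘ f) ↔ Alt f := by
  constructor <;> intro h i hi <;> have h2 := h i hi <;>
    split at h2 <;> split <;> simp_all [hg.lt_iff_lt, Function.comp]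
def AltIn (n N : ℕ) (s : Finset (Fin N)) : Type :=
  {f : Fin n → Fin N // (∀ k, f k ∈ s) ∧ Function.Injective f ∧ Alt f}
instance (n N : ℕ) (s : Finset (Fin N)) : Finite (AltIn n N s) := by
  unfold AltIn; infer_instance

lemma card_altIn {n N : ℕ} (s : Finset (Fin N)) (h : s.card = n) :
    Nat.card (AltIn n N s) = altPermCount n := by
  set e : Fin n ≃o ↥s := s.orderIsoOfFin h with he
  have hmono : StrictMono (fun x : ↥s => (x : Fin N)) := Subtype.strictMono_coe _
  refine (Nat.card_eq_of_bijective
    (fun c : {c : Equiv.Perm (Fin n) // IsAltPerm c} =>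
      (⟨fun k => (e (c.1 k) : Fin N), fun k => (e (c.1 k)).2,
        fun a b hab => c.1.injective (e.injective (Subtype.ext hab)),
        by
          have : (fun k => (e (c.1 k) : Fin N)) =
              (fun x : ↥s => (x : Fin N)) ∘ (⇑e ∘ ⇑c.1) := rfl
          rw [this, alt_comp hmono, alt_comp e.strictMono]
          exact c.2⟩ : AltIn n N s)) ⟨?_, ?_⟩).symm
  · intro c c' hcc
    have : ∀ k, (e (c.1 k) : Fin N) = (e (c'.1 k) : Fin N) := fun k => congrFun (congrArg Subtype.val hcc) k
    ext k
    exact congrArg Fin.val (e.injective (Subtype.ext (this k)))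
  · rintro ⟨f, hmem, hinj, halt⟩
    have hcinj : Function.Injective (fun k => e.symm ⟨f k, hmem k⟩) := by
      intro a b hab
      exact hinj (congrArg Subtype.val (e.symm.injective hab))
    have hcbij := Finite.injective_iff_bijective.mp hcinj
    refine ⟨⟨Equiv.ofBijective _ hcbij, ?_⟩, ?_⟩
    · show Alt _
      have : ⇑(Equiv.ofBijective _ hcbij) = (fun k => e.symm ⟨f k, hmem k⟩) := rfl
      rw [this]
      have h2 : f = (fun x : ↥s => (x : Fin N)) ∘ ⇑e ∘ (fun k => e.symm ⟨f k, hmem k⟩) := by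
        funext k; simp
      rw [h2, alt_comp hmono, alt_comp e.strictMono] at halt
      exact halt
    · apply Subtype.ext
      funext k
      show ((e (e.symm ⟨f k, hmem k⟩)) : Fin N) = f k
      simp

lemma nat_card_sigma {ι : Type*} [Fintype ι] (F : ι → Type*) [∀ a, Finite (F a)] :
    Nat.card (Σ a, F a) = ∑ a, Nat.card (F a) := by
  classical
  letI : ∀ a, Fintype (F a) := fun a => Fintype.ofFinite _
  simp [Nat.card_eq_fintype_card]

lemma card_sigma_altIn (N a b : ℕ) (hab : a + b = N) :
    Nat.card (Σ s : {s : Finset (Fin N) // s.card = a}, AltIn a N s.1 × AltIn b N s.1ᶜ) =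
      N.choose a * altPermCount a * altPermCount b := by
  rw [nat_card_sigma]
  have : ∀ s : {s : Finset (Fin N) // s.card = a},
      Nat.card (AltIn a N s.1 × AltIn b N s.1ᶜ) = altPermCount a * altPermCount b := by
    intro s
    rw [Nat.card_prod, card_altIn _ s.2, card_altIn _ (by
      rw [Finset.card_compl, s.2, Fintype.card_fin]; omega)]
  simp only [this, Finset.sum_const, Finset.card_univ, Fintype.card_finset_len,
    Fintype.card_fin, smul_eq_mul, mul_assoc]

lemma finset_eq_image {n N : ℕ} {s : Finset (Fin N)} (h : s.card = n) {f : Fin n → Fin N}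
    (hmem : ∀ k, f k ∈ s) (hinj : Function.Injective f) :
    s = Finset.image f Finset.univ := by
  refine (Finset.eq_of_subset_of_card_le ?_ ?_).symm
  · intro x hx
    obtain ⟨k, _, rfl⟩ := Finset.mem_image.mp hx
    exact hmem k
  · rw [Finset.card_image_of_injective _ hinj, Finset.card_univ, Fintype.card_fin, h]

/-- assembly of a permutation from head, top, tail -/
def assemble (N a b : ℕ) (hab : a + b = N) (hb : 1 ≤ b)
    (hd : Fin a → Fin N) (tl : Fin b → Fin N) (x : Fin (N + 1)) : Fin (N + 1) :=
  if h : x.val < a then (hd ⟨x.val, h⟩).castSucc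
  else if h2 : x.val = a then Fin.last N
  else (tl ⟨x.val - (a + 1), by omega⟩).castSucc

lemma assemble_lt {N a b : ℕ} (hab : a + b = N) (hb : 1 ≤ b)
    (hd : Fin a → Fin N) (tl : Fin b → Fin N) (x : Fin (N + 1)) (h : x.val < a) :
    assemble N a b hab hb hd tl x = (hd ⟨x.val, h⟩).castSucc := by
  simp [assemble, h]

lemma assemble_eq {N a b : ℕ} (hab : a + b = N) (hb : 1 ≤ b)
    (hd : Fin a → Fin N) (tl : Fin b → Fin N) (x : Fin (N + 1)) (h : x.val = a) :
    assemble N a b hab hb hd tl x = Fin.last N := by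
  simp [assemble, h]

lemma assemble_gt {N a b : ℕ} (hab : a + b = N) (hb : 1 ≤ b)
    (hd : Fin a → Fin N) (tl : Fin b → Fin N) (x : Fin (N + 1)) (h : a < x.val)
    (hlt : x.val - (a + 1) < b) :
    assemble N a b hab hb hd tl x = (tl ⟨x.val - (a + 1), hlt⟩).castSucc := by
  have h1 : ¬ x.val < a := by omega
  have h2 : ¬ x.val = a := by omega
  simp [assemble, h1, h2]

lemma assemble_injective {N a b : ℕ} (hab : a + b = N) (hb : 1 ≤ b)
    {s : Finset (Fin N)} {hd : Fin a → Fin N} {tl : Fin b → Fin N}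
    (hdmem : ∀ k, hd k ∈ s) (tlmem : ∀ k, tl k ∈ sᶜ)
    (hdinj : Function.Injective hd) (tlinj : Function.Injective tl) :
    Function.Injective (assemble N a b hab hb hd tl) := by
  have hne : ∀ (u : Fin a) (v : Fin b), hd u ≠ tl v := by
    intro u v huv
    exact (Finset.mem_compl.mp (tlmem v)) (huv ▸ hdmem u)
  intro x y hxy
  rcases lt_trichotomy x.val a with hx | hx | hx <;>
  rcases lt_trichotomy y.val a with hy | hy | hy
  · rw [assemble_lt _ _ _ _ _ hx, assemble_lt _ _ _ _ _ hy] at hxy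
    have := hdinj (Fin.castSucc_injective _ hxy)
    have := congrArg Fin.val this
    exact Fin.ext (by simpa using this)
  · rw [assemble_lt _ _ _ _ _ hx, assemble_eq _ _ _ _ _ hy] at hxy
    exact absurd hxy (Fin.ne_last_of_lt (Fin.castSucc_lt_last _))
  · rw [assemble_lt _ _ _ _ _ hx, assemble_gt _ _ _ _ _ hy (by omega)] at hxy
    exact absurd (Fin.castSucc_injective _ hxy) (hne _ _)
  · rw [assemble_eq _ _ _ _ _ hx, assemble_lt _ _ _ _ _ hy] at hxy
    exact absurd hxy.symm (Fin.ne_last_of_lt (Fin.castSucc_lt_last _))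
  · exact Fin.ext (hx.trans hy.symm)
  · rw [assemble_eq _ _ _ _ _ hx, assemble_gt _ _ _ _ _ hy (by omega)] at hxy
    exact absurd hxy.symm (Fin.ne_last_of_lt (Fin.castSucc_lt_last _))
  · rw [assemble_gt _ _ _ _ _ hx (by omega), assemble_lt _ _ _ _ _ hy] at hxy
    exact absurd (Fin.castSucc_injective _ hxy).symm (hne _ _)
  · rw [assemble_gt _ _ _ _ _ hx (by omega), assemble_eq _ _ _ _ _ hy] at hxy
    exact absurd hxy (Fin.ne_last_of_lt (Fin.castSucc_lt_last _))
  · rw [assemble_gt _ _ _ _ _ hx (by omega), assemble_gt _ _ _ _ _ hy (by omega)] at hxy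
    have := congrArg Fin.val (tlinj (Fin.castSucc_injective _ hxy))
    simp only at this
    exact Fin.ext (by omega)

lemma assemble_alt {N a b : ℕ} (hab : a + b = N) (ha : a % 2 = 1) (hb : b % 2 = 1)
    (hb1 : 1 ≤ b) {hd : Fin a → Fin N} {tl : Fin b → Fin N}
    (hda : Alt hd) (tla : Alt tl) : Alt (assemble N a b hab hb1 hd tl) := by
  intro k hk
  have hkN : k < N + 1 := by omega
  rcases lt_trichotomy (k+1) a with h | h | h
  · have hk1 : k < a := by omega
    have := hda k (by omega)
    by_cases hpar : k % 2 = 0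
    · rw [if_pos hpar] at this ⊢
      rw [assemble_lt hab hb1 hd tl ⟨k, hkN⟩ hk1,
        assemble_lt hab hb1 hd tl ⟨k+1, hk⟩ h, Fin.castSucc_lt_castSucc_iff]
      exact this
    · rw [if_neg hpar] at this ⊢
      rw [assemble_lt hab hb1 hd tl ⟨k, hkN⟩ hk1,
        assemble_lt hab hb1 hd tl ⟨k+1, hk⟩ h, Fin.castSucc_lt_castSucc_iff]
      exact this
  · have hk0 : k % 2 = 0 := by omega
    rw [if_pos hk0, assemble_lt hab hb1 hd tl ⟨k, hkN⟩ (show k < a by omega),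
      assemble_eq hab hb1 hd tl ⟨k+1, hk⟩ (show k + 1 = a from h)]
    exact Fin.castSucc_lt_last _
  · rcases lt_trichotomy k a with h2 | h2 | h2
    · omega
    · have hlt1 : (k+1) - (a+1) < b := by omega
      rw [if_neg (by omega), assemble_eq hab hb1 hd tl ⟨k, hkN⟩ (show k = a from h2),
        assemble_gt hab hb1 hd tl ⟨k+1, hk⟩ (show a < k + 1 by omega) hlt1]
      exact Fin.castSucc_lt_last _
    · have htb : k - (a+1) + 1 < b := by omega
      have hlt0 : k - (a+1) < b := by omega
      have hlt1 : (k+1) - (a+1) < b := by omega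
      have hcmp := tla (k - (a+1)) htb
      have harg : (⟨k - (a+1) + 1, htb⟩ : Fin b) = ⟨(k+1) - (a+1), hlt1⟩ := by
        simp only [Fin.mk.injEq]; omega
      by_cases hpar : k % 2 = 0
      · have hp2 : (k - (a+1)) % 2 = 0 := by omega
        rw [if_pos hp2, harg] at hcmp
        rw [if_pos hpar, assemble_gt hab hb1 hd tl ⟨k, hkN⟩ (show a < k from h2) hlt0,
          assemble_gt hab hb1 hd tl ⟨k+1, hk⟩ (show a < k + 1 by omega) hlt1,
          Fin.castSucc_lt_castSucc_iff]
        exact hcmp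
      · have hp2 : ¬ (k - (a+1)) % 2 = 0 := by omega
        rw [if_neg hp2, harg] at hcmp
        rw [if_neg hpar, assemble_gt hab hb1 hd tl ⟨k, hkN⟩ (show a < k from h2) hlt0,
          assemble_gt hab hb1 hd tl ⟨k+1, hk⟩ (show a < k + 1 by omega) hlt1,
          Fin.castSucc_lt_castSucc_iff]
        exact hcmp

lemma pos_top_odd {N : ℕ} (hN : N % 2 = 0) (hN1 : 1 ≤ N) (c : Equiv.Perm (Fin (N+1)))
    (hc : IsAltPerm c) : (c.symm (Fin.last N)).val % 2 = 1 := by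
  set p := (c.symm (Fin.last N)).val with hp
  have hplt : p < N + 1 := (c.symm (Fin.last N)).isLt
  have hcp : c ⟨p, hplt⟩ = Fin.last N := by
    have : (⟨p, hplt⟩ : Fin (N+1)) = c.symm (Fin.last N) := Fin.ext rfl
    rw [this, Equiv.apply_symm_apply]
  by_contra hodd
  have hpe : p % 2 = 0 := by omega
  rcases lt_or_eq_of_le (show p + 1 ≤ N + 1 by omega) with h1 | h1
  · have := hc p h1
    rw [if_pos hpe, hcp] at this
    exact absurd this (Fin.not_lt.mpr (Fin.le_last _))
  · have hpN : p = N := by omega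
    have hN2 : 2 ≤ N := by omega
    have h2 : (N - 1) + 1 < N + 1 := by omega
    have := hc (N - 1) h2
    rw [if_neg (by omega)] at this
    have harg : (⟨N - 1 + 1, h2⟩ : Fin (N+1)) = ⟨p, hplt⟩ := by
      simp only [Fin.mk.injEq]; omega
    rw [harg, hcp] at this
    exact absurd this (Fin.not_lt.mpr (Fin.le_last _))

/-- head component of the disassembly of an alternating permutation -/
def headOf (N a : ℕ) (c : Equiv.Perm (Fin (N+1))) (hpos : (c.symm (Fin.last N)).val = a)
    (haN : a < N + 1) (k : Fin a) : Fin N :=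
  ⟨(c ⟨k.val, by omega⟩).val, by
    apply Fin.val_lt_last
    intro hcx
    have hx : (⟨k.val, by omega⟩ : Fin (N+1)) = c.symm (Fin.last N) :=
      ((Equiv.symm_apply_eq c).mpr hcx.symm).symm
    have := congrArg Fin.val hx
    simp only [hpos] at this
    have := k.isLt
    omega⟩

/-- tail component of the disassembly of an alternating permutation -/
def tailOf (N a b : ℕ) (hab : a + b = N) (c : Equiv.Perm (Fin (N+1)))
    (hpos : (c.symm (Fin.last N)).val = a) (k : Fin b) : Fin N :=
  ⟨(c ⟨a + 1 + k.val, by omega⟩).val, by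
    apply Fin.val_lt_last
    intro hcx
    have hx : (⟨a + 1 + k.val, by omega⟩ : Fin (N+1)) = c.symm (Fin.last N) :=
      ((Equiv.symm_apply_eq c).mpr hcx.symm).symm
    have := congrArg Fin.val hx
    simp only [hpos] at this
    omega⟩

/-- the sigma type of splittings -/
def Splits (N a b : ℕ) : Type :=
  Σ s : {s : Finset (Fin N) // s.card = a}, AltIn a N s.1 × AltIn b N s.1ᶜ

noncomputable def FmapPerm (N a b : ℕ) (hb1 : 1 ≤ b) (hab : a + b = N)
    (T : Splits N a b) : Equiv.Perm (Fin (N+1)) :=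
  Equiv.ofBijective (assemble N a b hab hb1 T.2.1.1 T.2.2.1)
    (Finite.injective_iff_bijective.mp
      (assemble_injective hab hb1 T.2.1.2.1 T.2.2.2.1 T.2.1.2.2.1 T.2.2.2.2.1))

lemma FmapPerm_coe (N a b : ℕ) (hb1 : 1 ≤ b) (hab : a + b = N) (T : Splits N a b) :
    ⇑(FmapPerm N a b hb1 hab T) = assemble N a b hab hb1 T.2.1.1 T.2.2.1 := rfl

noncomputable def Fmap (N a b : ℕ) (ha : a % 2 = 1) (hb : b % 2 = 1) (hab : a + b = N)
    (T : Splits N a b) :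
    {c : Equiv.Perm (Fin (N+1)) // IsAltPerm c ∧ (c.symm (Fin.last N)).val = a} :=
  have hb1 : 1 ≤ b := by omega
  ⟨FmapPerm N a b hb1 hab T, by
    constructor
    · show Alt _
      rw [FmapPerm_coe]
      exact assemble_alt hab ha hb hb1 T.2.1.2.2.2 T.2.2.2.2.2
    · have haN : a < N + 1 := by omega
      have h1 : FmapPerm N a b hb1 hab T ⟨a, haN⟩ = Fin.last N :=
        assemble_eq hab hb1 T.2.1.1 T.2.2.1 ⟨a, haN⟩ rfl
      rw [← h1, Equiv.symm_apply_apply]⟩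

lemma Fmap_injective (N a b : ℕ) (ha : a % 2 = 1) (hb : b % 2 = 1) (hab : a + b = N) :
    Function.Injective (Fmap N a b ha hb hab) := by
  have hb1 : 1 ≤ b := by omega
  rintro ⟨⟨s, hs⟩, ⟨hd, hdmem, hdinj, hdalt⟩, ⟨tl, tlmem, tlinj, tlalt⟩⟩
    ⟨⟨s', hs'⟩, ⟨hd', hdmem', hdinj', hdalt'⟩, ⟨tl', tlmem', tlinj', tlalt'⟩⟩ hT
  have h0 := congrArg Subtype.val hT
  have hfun : assemble N a b hab hb1 hd tl = assemble N a b hab hb1 hd' tl' :=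
    congrArg DFunLike.coe h0
  have hdeq : hd = hd' := by
    funext k
    have hklt : (k : ℕ) < N + 1 := by omega
    have := congrFun hfun ⟨k.val, hklt⟩
    rw [assemble_lt hab hb1 hd tl ⟨k.val, hklt⟩ k.isLt,
      assemble_lt hab hb1 hd' tl' ⟨k.val, hklt⟩ k.isLt] at this
    have h2 := Fin.castSucc_injective _ this
    simpa [Fin.eta] using h2
  have tleq : tl = tl' := by
    funext k
    have hklt : a + 1 + (k : ℕ) < N + 1 := by omega
    have hgt : a < a + 1 + k.val := by omega
    have hlt2 : a + 1 + k.val - (a+1) < b := by omega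
    have := congrFun hfun ⟨a + 1 + k.val, hklt⟩
    rw [assemble_gt hab hb1 hd tl ⟨a + 1 + k.val, hklt⟩ hgt hlt2,
      assemble_gt hab hb1 hd' tl' ⟨a + 1 + k.val, hklt⟩ hgt hlt2] at this
    have h2 := Fin.castSucc_injective _ this
    have harg : (⟨a + 1 + k.val - (a+1), hlt2⟩ : Fin b) = k := Fin.ext (by simp)
    rwa [harg] at h2
  have hseq : s = s' := by
    rw [finset_eq_image hs hdmem hdinj, finset_eq_image hs' hdmem' hdinj', hdeq]
  subst hseq hdeq tleq
  rfl

lemma Fmap_surjective (N a b : ℕ) (ha : a % 2 = 1) (hb : b % 2 = 1) (hab : a + b = N) :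
    Function.Surjective (Fmap N a b ha hb hab) := by
  have hb1 : 1 ≤ b := by omega
  have ha1 : 1 ≤ a := by omega
  rintro ⟨c, hc, hpos⟩
  have haN : a < N + 1 := by omega
  have hdinj : Function.Injective (headOf N a c hpos haN) := by
    intro u v huv
    have h0 := congrArg Fin.val huv
    have h1 : (c ⟨u.val, by omega⟩ : Fin (N+1)).val = (c ⟨v.val, by omega⟩).val := h0
    have h2 := congrArg Fin.val (c.injective (Fin.ext h1))
    exact Fin.ext h2
  have tlinj : Function.Injective (tailOf N a b hab c hpos) := by
    intro u v huv
    have h0 := congrArg Fin.val huv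
    have h1 : (c ⟨a + 1 + u.val, by omega⟩ : Fin (N+1)).val =
        (c ⟨a + 1 + v.val, by omega⟩).val := h0
    have h2 : a + 1 + u.val = a + 1 + v.val := congrArg Fin.val (c.injective (Fin.ext h1))
    exact Fin.ext (by omega)
  refine ⟨⟨⟨Finset.image (headOf N a c hpos haN) Finset.univ, ?_⟩,
    ⟨headOf N a c hpos haN, ?_, hdinj, ?_⟩,
    ⟨tailOf N a b hab c hpos, ?_, tlinj, ?_⟩⟩, ?_⟩
  · rw [Finset.card_image_of_injective _ hdinj, Finset.card_univ, Fintype.card_fin]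
  · exact fun k => Finset.mem_image_of_mem _ (Finset.mem_univ k)
  · -- Alt head
    intro k hk
    have h0 := hc k (by omega)
    by_cases hpar : k % 2 = 0
    · rw [if_pos hpar] at h0 ⊢; exact h0
    · rw [if_neg hpar] at h0 ⊢; exact h0
  · -- tail lands in complement
    intro k
    rw [Finset.mem_compl]
    intro hmem
    obtain ⟨u, -, huv⟩ := Finset.mem_image.mp hmem
    have h0 := congrArg Fin.val huv
    have h1 : (c ⟨u.val, by omega⟩ : Fin (N+1)).val = (c ⟨a + 1 + k.val, by omega⟩).val := h0
    have h2 : u.val = a + 1 + k.val := congrArg Fin.val (c.injective (Fin.ext h1))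
    have := u.isLt
    omega
  · -- Alt tail
    intro k hk
    have h0 := hc (a + 1 + k) (by omega)
    by_cases hpar : k % 2 = 0
    · rw [if_pos hpar]
      rw [if_pos (show (a + 1 + k) % 2 = 0 by omega)] at h0
      exact h0
    · rw [if_neg hpar]
      rw [if_neg (show ¬ (a + 1 + k) % 2 = 0 by omega)] at h0
      exact h0
  · -- Fmap of this triple is c
    apply Subtype.ext
    apply Equiv.coe_fn_injective
    show assemble N a b hab hb1 (headOf N a c hpos haN) (tailOf N a b hab c hpos) = ⇑c
    funext x
    rcases lt_trichotomy x.val a with hx | hx | hx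
    · rw [assemble_lt hab hb1 _ _ x hx]
      apply Fin.ext
      show (c ⟨x.val, by omega⟩).val = (c x).val
      exact congrArg (fun y => (c y).val) (Fin.ext rfl)
    · rw [assemble_eq hab hb1 _ _ x hx]
      have hx2 : x = c.symm (Fin.last N) := Fin.ext (hx.trans hpos.symm)
      rw [hx2, Equiv.apply_symm_apply]
    · rw [assemble_gt hab hb1 _ _ x hx (by omega)]
      apply Fin.ext
      show (c ⟨a + 1 + (x.val - (a + 1)), by omega⟩).val = (c x).val
      exact congrArg (fun y => (c y).val) (Fin.ext (show a + 1 + (x.val - (a+1)) = x.val by omega))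

instance (N a b : ℕ) : Finite (Splits N a b) := by
  unfold Splits; infer_instance

lemma card_fiber_gen (N a b : ℕ) (ha : a % 2 = 1) (hb : b % 2 = 1) (hab : a + b = N) :
    Nat.card {c : Equiv.Perm (Fin (N+1)) // IsAltPerm c ∧ (c.symm (Fin.last N)).val = a} =
      N.choose a * altPermCount a * altPermCount b := by
  rw [← card_sigma_altIn N a b hab]
  exact (Nat.card_eq_of_bijective (Fmap N a b ha hb hab)
    ⟨Fmap_injective N a b ha hb hab, Fmap_surjective N a b ha hb hab⟩).symm


/-- `A (2i+1) = ∑_{j=1}^{i} binom(2i, 2j-1) · A (2j-1) · A (2(i-j)+1)`. -/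
theorem altPerm_convolution_odd_W (i : ℕ) (hi : 1 ≤ i) :
    altPermCount (2 * i + 1) =
      ∑ j ∈ Finset.Icc 1 i,
        Nat.choose (2 * i) (2 * j - 1) * altPermCount (2 * j - 1) *
          altPermCount (2 * (i - j) + 1) := by
  classical
  have hparity : ∀ c : {c : Equiv.Perm (Fin (2*i+1)) // IsAltPerm c},
      ((c.1.symm (Fin.last (2*i))).val) % 2 = 1 :=
    fun c => pos_top_odd (by omega) (by omega) c.1 c.2
  have hmem : ∀ c : {c : Equiv.Perm (Fin (2*i+1)) // IsAltPerm c},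
      ((c.1.symm (Fin.last (2*i))).val + 1)/2 ∈ Finset.Icc 1 i := by
    intro c
    have h1 := hparity c
    have h2 := (c.1.symm (Fin.last (2*i))).isLt
    rw [Finset.mem_Icc]
    omega
  set posF : {c : Equiv.Perm (Fin (2*i+1)) // IsAltPerm c} → ↥(Finset.Icc 1 i) :=
    fun c => ⟨((c.1.symm (Fin.last (2*i))).val + 1)/2, hmem c⟩ with hposF
  have hcard : altPermCount (2*i+1) =
      Nat.card (Σ j : ↥(Finset.Icc 1 i), {c // posF c = j}) := by
    rw [altPermCount]
    exact (Nat.card_congr (Equiv.sigmaFiberEquiv posF)).symm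
  rw [hcard, nat_card_sigma, ← Finset.sum_coe_sort (Finset.Icc 1 i)
    (fun j => Nat.choose (2*i) (2*j-1) * altPermCount (2*j-1) * altPermCount (2*(i-j)+1))]
  apply Finset.sum_congr rfl
  intro j _
  have hj := Finset.mem_Icc.mp j.2
  rw [← card_fiber_gen (2*i) (2*j.1-1) (2*(i-j.1)+1) (by omega) (by omega) (by omega)]
  refine Nat.card_congr ⟨fun x => ⟨x.1.1, x.1.2, ?_⟩, fun c => ⟨⟨c.1, c.2.1⟩, ?_⟩,
    fun x => rfl, fun c => rfl⟩
  · have h1 := congrArg Subtype.val x.2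
    have h2 := hparity x.1
    simp only [hposF] at h1
    omega
  · apply Subtype.ext
    have h2 := c.2.2
    simp only [hposF]
    omega
end
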